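/- arXiv:2602.16260 — 7 statements merged into one kernel-verified Lean document; each statement's English description precedes it below -/
import Mathlib

section
/- For all real numbers α > 0, β > 0, k > 0 and 0 < p < q with k·p < 1 and k·q > 1, the improper integral ∫₀^∞ (α·z^p + β·z^q)^(−k) dz converges and equals Γ((1−k·p)/(q−p)) · Γ((k·q−1)/(q−p)) / (α^k · Γ(k) · (q−p)) · (α/β)^((1−k·p)/(q−p)). -/
/-!
Substituting `z = t ^ (q - p)⁻¹` and then `t = (α / β) s` turns the integral into
`(q - p)⁻¹ α⁻ᵏ (α / β)ᵃ ∫₀^∞ sᵃ⁻¹ (1 + s)⁻ᵏ ds` with `a = (1 - k p) / (q - p)` and `b = k - a`,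
both positive exactly when `k p < 1 < k q`. The last integral is the Beta integral `B(a, b)` in
its second form, which the substitution `s = x / (1 - x)` takes back to Euler's integral over
`(0, 1)`.
-/

open MeasureTheory Real Set

lemma ofReal_rpow_mul_one_sub_rpow {x : ℝ} (hx : x ∈ Icc 0 1) (a b : ℝ) :
    ((x ^ (a - 1) * (1 - x) ^ (b - 1) : ℝ) : ℂ) =
      (x : ℂ) ^ ((a : ℂ) - 1) * (1 - (x : ℂ)) ^ ((b : ℂ) - 1) := by
  rw [Complex.ofReal_mul, Complex.ofReal_cpow hx.1, Complex.ofReal_cpow (sub_nonneg.2 hx.2)]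
  push_cast
  rfl

lemma integrableOn_Ioo_rpow_mul_one_sub_rpow {a b : ℝ} (ha : 0 < a) (hb : 0 < b) :
    IntegrableOn (fun x : ℝ => x ^ (a - 1) * (1 - x) ^ (b - 1)) (Ioo 0 1) := by
  have hconv : IntegrableOn
      (fun x : ℝ => (x : ℂ) ^ ((a : ℂ) - 1) * (1 - (x : ℂ)) ^ ((b : ℂ) - 1)) (Ioc 0 1) :=
    (intervalIntegrable_iff_integrableOn_Ioc_of_le zero_le_one).1
      (Complex.betaIntegral_convergent (by simpa using ha) (by simpa using hb))
  refine IntegrableOn.congr_fun (hconv.mono_set Ioo_subset_Ioc_self).re (fun x hx => ?_)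
    measurableSet_Ioo
  rw [← ofReal_rpow_mul_one_sub_rpow (Ioo_subset_Icc_self hx), RCLike.re_to_complex,
    Complex.ofReal_re]

lemma integral_Ioo_rpow_mul_one_sub_rpow {a b : ℝ} (ha : 0 < a) (hb : 0 < b) :
    ∫ x in Ioo 0 1, x ^ (a - 1) * (1 - x) ^ (b - 1) = Gamma a * Gamma b / Gamma (a + b) := by
  have hbeta : Complex.betaIntegral a b =
      ((∫ x in Ioo 0 1, x ^ (a - 1) * (1 - x) ^ (b - 1) : ℝ) : ℂ) := by
    rw [Complex.betaIntegral, intervalIntegral.integral_of_le zero_le_one,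
      integral_Ioc_eq_integral_Ioo, ← integral_complex_ofReal]
    exact setIntegral_congr_fun measurableSet_Ioo fun x hx =>
      (ofReal_rpow_mul_one_sub_rpow (Ioo_subset_Icc_self hx) a b).symm
  apply Complex.ofReal_injective
  rw [← hbeta, Complex.betaIntegral_eq_Gamma_mul_div _ _ (by simpa using ha) (by simpa using hb),
    ← Complex.ofReal_add]
  simp only [Complex.Gamma_ofReal, Complex.ofReal_mul, Complex.ofReal_div]

lemma hasDerivAt_div_one_sub {x : ℝ} (hx : x ≠ 1) :
    HasDerivAt (fun y : ℝ => y / (1 - y)) (1 / (1 - x) ^ 2) x := by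
  have h := (hasDerivAt_id' x).fun_div ((hasDerivAt_id' x).const_sub 1) (sub_ne_zero.2 hx.symm)
  rwa [show (1 * (1 - x) - x * -1) / (1 - x) ^ 2 = 1 / (1 - x) ^ 2 by ring] at h

lemma injOn_div_one_sub : InjOn (fun x : ℝ => x / (1 - x)) (Ioo 0 1) := by
  intro x hx y hy hxy
  have hx1 : 1 - x ≠ 0 := by linarith [hx.2]
  have hy1 : 1 - y ≠ 0 := by linarith [hy.2]
  simp only [div_eq_div_iff hx1 hy1] at hxy
  linarith

lemma image_div_one_sub_Ioo : (fun x : ℝ => x / (1 - x)) '' Ioo 0 1 = Ioi 0 := by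
  ext t
  constructor
  · rintro ⟨x, ⟨hx0, hx1⟩, rfl⟩
    exact div_pos hx0 (sub_pos.2 hx1)
  · intro (ht : 0 < t)
    refine ⟨t / (1 + t), ⟨by positivity, (div_lt_one (by positivity)).2 (by linarith)⟩, ?_⟩
    field_simp
    ring

lemma abs_deriv_mul_rpow_mul_one_add_rpow {x : ℝ} (hx : x ∈ Ioo 0 1) (a b : ℝ) :
    |1 / (1 - x) ^ 2| * ((x / (1 - x)) ^ (a - 1) * (1 + x / (1 - x)) ^ (-(a + b))) =
      x ^ (a - 1) * (1 - x) ^ (b - 1) := by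
  have hu : 0 < 1 - x := sub_pos.2 hx.2
  have hsum : 1 + x / (1 - x) = (1 - x)⁻¹ := by field_simp; ring
  have hsplit :
      (1 - x) ^ (a + b) = (1 - x) ^ (a - 1) * (1 - x) ^ (b - 1) * (1 - x) ^ (2 : ℝ) := by
    rw [← rpow_add hu, ← rpow_add hu]
    ring_nf
  rw [hsum, inv_rpow hu.le, rpow_neg hu.le, inv_inv, hsplit, div_rpow hx.1.le hu.le, rpow_two,
    abs_of_pos (by positivity)]
  have : 0 < (1 - x) ^ (a - 1) := rpow_pos_of_pos hu _
  field_simp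

lemma integrableOn_Ioi_rpow_mul_one_add_rpow {a b : ℝ} (ha : 0 < a) (hb : 0 < b) :
    IntegrableOn (fun t : ℝ => t ^ (a - 1) * (1 + t) ^ (-(a + b))) (Ioi 0) := by
  rw [← image_div_one_sub_Ioo,
    integrableOn_image_iff_integrableOn_abs_deriv_smul measurableSet_Ioo
      (fun x hx => (hasDerivAt_div_one_sub hx.2.ne).hasDerivWithinAt) injOn_div_one_sub]
  exact (integrableOn_Ioo_rpow_mul_one_sub_rpow ha hb).congr_fun
    (fun x hx => (abs_deriv_mul_rpow_mul_one_add_rpow hx a b).symm) measurableSet_Ioo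

lemma integral_Ioi_rpow_mul_one_add_rpow {a b : ℝ} (ha : 0 < a) (hb : 0 < b) :
    ∫ t in Ioi 0, t ^ (a - 1) * (1 + t) ^ (-(a + b)) = Gamma a * Gamma b / Gamma (a + b) := by
  rw [← image_div_one_sub_Ioo,
    integral_image_eq_integral_abs_deriv_smul measurableSet_Ioo
      (fun x hx => (hasDerivAt_div_one_sub hx.2.ne).hasDerivWithinAt) injOn_div_one_sub,
    ← integral_Ioo_rpow_mul_one_sub_rpow ha hb]
  exact setIntegral_congr_fun measurableSet_Ioo fun x hx =>
    abs_deriv_mul_rpow_mul_one_add_rpow hx a b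

section Scaling

variable {a b α β : ℝ}

lemma rpow_mul_add_mul_rpow_comp_mul (hα : 0 < α) (hβ : 0 < β) {s : ℝ} (hs : 0 < s) :
    (α / β * s) ^ (a - 1) * (α + β * (α / β * s)) ^ (-(a + b)) =
      (α / β) ^ (a - 1) * α ^ (-(a + b)) * (s ^ (a - 1) * (1 + s) ^ (-(a + b))) := by
  rw [show α + β * (α / β * s) = α * (1 + s) by field_simp,
    mul_rpow (by positivity) hs.le, mul_rpow hα.le (by positivity)]
  ring

lemma integrableOn_Ioi_rpow_mul_add_mul_rpow (ha : 0 < a) (hb : 0 < b) (hα : 0 < α)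
    (hβ : 0 < β) :
    IntegrableOn (fun t : ℝ => t ^ (a - 1) * (α + β * t) ^ (-(a + b))) (Ioi 0) := by
  have hc : 0 < α / β := div_pos hα hβ
  rw [← mul_zero (α / β), ← integrableOn_Ioi_comp_mul_left_iff _ 0 hc]
  exact IntegrableOn.congr_fun ((integrableOn_Ioi_rpow_mul_one_add_rpow ha hb).const_mul _)
    (fun s hs => (rpow_mul_add_mul_rpow_comp_mul hα hβ hs).symm) measurableSet_Ioi

lemma integral_Ioi_rpow_mul_add_mul_rpow (ha : 0 < a) (hb : 0 < b) (hα : 0 < α) (hβ : 0 < β) :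
    ∫ t in Ioi 0, t ^ (a - 1) * (α + β * t) ^ (-(a + b)) =
      Gamma a * Gamma b / (α ^ (a + b) * Gamma (a + b)) * (α / β) ^ a := by
  have hc : 0 < α / β := div_pos hα hβ
  rw [← mul_zero (α / β), ← integral_comp_mul_left_Ioi' _ 0 hc,
    setIntegral_congr_fun measurableSet_Ioi fun s hs => rpow_mul_add_mul_rpow_comp_mul hα hβ hs,
    integral_const_mul, integral_Ioi_rpow_mul_one_add_rpow ha hb, smul_eq_mul,
    rpow_neg hα.le, rpow_sub_one hc.ne']
  have := Gamma_pos_of_pos (add_pos ha hb)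
  field_simp

end Scaling

lemma rpow_sub_one_mul_add_mul_rpow_comp_rpow {α β k p q r t : ℝ} (hα : 0 ≤ α) (hβ : 0 ≤ β)
    (ht : 0 < t) (hr : r * (q - p) = 1) :
    t ^ (r - 1) * (α * (t ^ r) ^ p + β * (t ^ r) ^ q) ^ (-k) =
      t ^ (r * (1 - k * p) - 1) * (α + β * t) ^ (-k) := by
  have hsum : α * (t ^ r) ^ p + β * (t ^ r) ^ q = t ^ (r * p) * (α + β * t) := by
    rw [← rpow_mul ht.le, ← rpow_mul ht.le, show r * q = r * p + 1 by linear_combination hr,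
      rpow_add ht, rpow_one]
    ring
  rw [hsum, mul_rpow (by positivity) (by positivity), ← rpow_mul ht.le, ← mul_assoc,
    ← rpow_add ht]
  congr 2
  ring

theorem settling_time_integral_general
    (α β k p q : ℝ) (hα : 0 < α) (hβ : 0 < β) (hk : 0 < k)
    (hpq : p < q) (hkp : k * p < 1) (hkq : 1 < k * q) :
    IntegrableOn (fun z : ℝ => (α * z ^ p + β * z ^ q) ^ (-k)) (Set.Ioi 0) ∧
    ∫ z in Set.Ioi (0 : ℝ), (α * z ^ p + β * z ^ q) ^ (-k) =
      Real.Gamma ((1 - k * p) / (q - p)) * Real.Gamma ((k * q - 1) / (q - p)) /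
        (α ^ k * Real.Gamma k * (q - p)) * (α / β) ^ ((1 - k * p) / (q - p)) := by
  have hqp : 0 < q - p := sub_pos.2 hpq
  set a := (1 - k * p) / (q - p) with ha_def
  set b := (k * q - 1) / (q - p) with hb_def
  have ha : 0 < a := div_pos (by linarith) hqp
  have hb : 0 < b := div_pos (by linarith) hqp
  have hab : a + b = k := by rw [ha_def, hb_def]; field_simp; ring
  have hr : 0 < (q - p)⁻¹ := inv_pos.2 hqp
  have hsubst : EqOn
      (fun t => t ^ ((q - p)⁻¹ - 1) • (α * (t ^ (q - p)⁻¹) ^ p + β * (t ^ (q - p)⁻¹) ^ q) ^ (-k))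
      (fun t => t ^ (a - 1) * (α + β * t) ^ (-(a + b))) (Ioi 0) := fun t ht => by
    dsimp only
    rw [smul_eq_mul, hab, rpow_sub_one_mul_add_mul_rpow_comp_rpow hα.le hβ.le ht
      (inv_mul_cancel₀ hqp.ne')]
    congr 3
    rw [ha_def]
    ring
  constructor
  · rw [← integrableOn_Ioi_comp_rpow_iff' _ hr.ne']
    exact (integrableOn_Ioi_rpow_mul_add_mul_rpow ha hb hα hβ).congr_fun hsubst.symm
      measurableSet_Ioi
  · rw [← integral_comp_rpow_Ioi_of_pos hr]
    simp only [mul_smul]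
    rw [integral_smul, setIntegral_congr_fun measurableSet_Ioi hsubst,
      integral_Ioi_rpow_mul_add_mul_rpow ha hb hα hβ, hab, smul_eq_mul]
    have := Gamma_pos_of_pos hk
    field_simp

/-- The settling-time integral: for `α, β, k > 0`, `0 < p < q`, `k*p < 1 < k*q`,
the improper integral `∫₀^∞ (α z^p + β z^q)^(-k) dz` converges and equals
`Γ((1-kp)/(q-p)) Γ((kq-1)/(q-p)) / (α^k Γ(k) (q-p)) · (α/β)^((1-kp)/(q-p))`. -/
theorem settling_time_integral
    (α β k p q : ℝ) (hα : 0 < α) (hβ : 0 < β) (hk : 0 < k)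
    (hp : 0 < p) (hpq : p < q) (hkp : k * p < 1) (hkq : 1 < k * q) :
    IntegrableOn (fun z : ℝ => (α * z ^ p + β * z ^ q) ^ (-k)) (Set.Ioi 0) ∧
    ∫ z in Set.Ioi (0 : ℝ), (α * z ^ p + β * z ^ q) ^ (-k) =
      Real.Gamma ((1 - k * p) / (q - p)) * Real.Gamma ((k * q - 1) / (q - p)) /
        (α ^ k * Real.Gamma k * (q - p)) * (α / β) ^ ((1 - k * p) / (q - p)) :=
  settling_time_integral_general α β k p q hα hβ hk hpq hkp hkq
end

section
/- Let α, β, k > 0 and 0 < p < q with k·p < 1 and k·q > 1. If x : ℝ → ℝ satisfies, for every t ≥ 0, that x is differentiable at t with derivative x'(t) = −(α·|x(t)|^p + β·|x(t)|^q)^k · sign(x(t)), then x(t) = 0 for every t ≥ T(x(0)), where T(x₀) := ∫₀^{|x₀|} (α·z^p + β·z^q)^(−k) dz. (The settling time from initial condition x₀ is at most the separation-of-variables integral T(x₀).) -/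
open Real MeasureTheory


lemma g_intble (α β k p q : ℝ) (hα : 0 < α) (hβ : 0 < β) (hk : 0 < k)
    (hp : 0 < p) (hkp : k * p < 1) (b : ℝ) (hb : 0 ≤ b) :
    IntervalIntegrable (fun z : ℝ => (α * z ^ p + β * z ^ q) ^ (-k)) volume 0 b := by
  have hbase : IntervalIntegrable (fun z : ℝ => α ^ (-k) * z ^ (-(k*p))) volume 0 b :=
    (intervalIntegral.intervalIntegrable_rpow' (by linarith)).const_mul _
  have hmeas : Measurable (fun z : ℝ => (α * z ^ p + β * z ^ q) ^ (-k)) := by fun_prop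
  refine hbase.mono_fun' hmeas.aestronglyMeasurable ?_
  rw [Set.uIoc_of_le hb]
  filter_upwards [ae_restrict_mem measurableSet_Ioc] with z hz
  obtain ⟨hz0, _⟩ := hz
  have hzp : 0 < z ^ p := Real.rpow_pos_of_pos hz0 p
  have hzq : 0 ≤ z ^ q := Real.rpow_nonneg hz0.le q
  have hf : 0 < α * z ^ p := by positivity
  have h1 : (α * z ^ p + β * z ^ q) ^ (-k) ≤ (α * z ^ p) ^ (-k) :=
    Real.rpow_le_rpow_of_nonpos hf (by nlinarith) (by linarith)
  have h2 : (α * z ^ p) ^ (-k) = α ^ (-k) * z ^ (-(k*p)) := by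
    rw [Real.mul_rpow hα.le hzp.le, ← Real.rpow_mul hz0.le]
    ring_nf
  have hg0 : 0 ≤ (α * z ^ p + β * z ^ q) ^ (-k) :=
    Real.rpow_nonneg (by nlinarith) _
  simpa [Real.norm_eq_abs, abs_of_nonneg hg0, h2] using h1

/-- Once the solution hits zero, it stays zero. -/
lemma stays_zero (α β k p q : ℝ) (hα : 0 < α) (hβ : 0 < β) (hk : 0 < k)
    (hp : 0 < p) (hq : 0 < q)
    (x : ℝ → ℝ)
    (hx : ∀ t : ℝ, 0 ≤ t →
      HasDerivAt x (-(α * |x t| ^ p + β * |x t| ^ q) ^ k * Real.sign (x t)) t)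
    (s t : ℝ) (hs : 0 ≤ s) (hst : s ≤ t) (hxs : x s = 0) : x t = 0 := by
  set W : ℝ → ℝ := fun u => (x u) ^ 2 with hW
  have hderiv : ∀ u : ℝ, 0 ≤ u → HasDerivAt W
      (2 * x u ^ 1 * (-(α * |x u| ^ p + β * |x u| ^ q) ^ k * Real.sign (x u))) u :=
    fun u hu => (hx u hu).pow 2
  have hkey : ∀ u : ℝ, 0 ≤ u →
      2 * x u ^ 1 * (-(α * |x u| ^ p + β * |x u| ^ q) ^ k * Real.sign (x u)) ≤ 0 := by
    intro u hu
    have hfpos : 0 ≤ (α * |x u| ^ p + β * |x u| ^ q) ^ k := by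
      have h1 : 0 ≤ |x u| ^ p := Real.rpow_nonneg (abs_nonneg _) _
      have h2 : 0 ≤ |x u| ^ q := Real.rpow_nonneg (abs_nonneg _) _
      exact Real.rpow_nonneg (by nlinarith) _
    rcases lt_trichotomy (x u) 0 with h | h | h
    · rw [Real.sign_of_neg h]; nlinarith
    · simp [h]
    · rw [Real.sign_of_pos h]; nlinarith
  have hanti : AntitoneOn W (Set.Icc s t) := by
    apply antitoneOn_of_deriv_nonpos (convex_Icc s t)
    · intro u hu
      exact (hderiv u (hs.trans hu.1)).continuousAt.continuousWithinAt
    · intro u hu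
      rw [interior_Icc] at hu
      exact (hderiv u (by linarith [hu.1])).differentiableAt.differentiableWithinAt
    · intro u hu
      rw [interior_Icc] at hu
      have h0u : 0 ≤ u := by linarith [hu.1]
      rw [(hderiv u h0u).deriv]
      exact hkey u h0u
  have h1 : W t ≤ W s := hanti (Set.left_mem_Icc.2 hst) (Set.right_mem_Icc.2 hst) hst
  have h2 : W s = 0 := by simp [hW, hxs]
  have h3 : 0 ≤ W t := sq_nonneg _
  have : x t ^ 2 = 0 := le_antisymm (by rw [← h2]; exact h1) h3
  exact pow_eq_zero_iff (two_ne_zero).symm.symm |>.mp this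

/-- If the solution is positive on the whole interval `[0, T]`, contradiction. -/
lemma no_all_pos (α β k p q : ℝ) (hα : 0 < α) (hβ : 0 < β) (hk : 0 < k)
    (hp : 0 < p) (hq : 0 < q) (hkp : k * p < 1)
    (x : ℝ → ℝ)
    (hx : ∀ t : ℝ, 0 ≤ t →
      HasDerivAt x (-(α * |x t| ^ p + β * |x t| ^ q) ^ k * Real.sign (x t)) t)
    (hpos : ∀ t ∈ Set.Icc (0:ℝ) (∫ z in (0:ℝ)..|x 0|, (α * z ^ p + β * z ^ q) ^ (-k)),
      0 < x t) : False := by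
  set g : ℝ → ℝ := fun z => (α * z ^ p + β * z ^ q) ^ (-k) with hg
  set T : ℝ := ∫ z in (0:ℝ)..|x 0|, g z with hTdef
  have hgnonneg : ∀ z ∈ Set.Icc (0:ℝ) |x 0|, 0 ≤ g z := by
    intro z hz
    have h1 : 0 ≤ z ^ p := Real.rpow_nonneg hz.1 _
    have h2 : 0 ≤ z ^ q := Real.rpow_nonneg hz.1 _
    exact Real.rpow_nonneg (by nlinarith) _
  have hT0 : 0 ≤ T := intervalIntegral.integral_nonneg (abs_nonneg _) hgnonneg
  have hx0pos : 0 < x 0 := hpos 0 ⟨le_refl 0, hT0⟩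
  have habs0 : |x 0| = x 0 := abs_of_pos hx0pos
  -- V t = ∫_0^{x t} g
  set V : ℝ → ℝ := fun t => ∫ z in (0:ℝ)..x t, g z with hV
  have hVderiv : ∀ t ∈ Set.uIcc (0:ℝ) T, HasDerivAt V (-1) t := by
    intro t ht
    rw [Set.uIcc_of_le hT0] at ht
    have hxt : 0 < x t := hpos t ht
    have hfpos : 0 < α * (x t) ^ p + β * (x t) ^ q := by
      have h1 : 0 < (x t) ^ p := Real.rpow_pos_of_pos hxt _
      have h2 : 0 < (x t) ^ q := Real.rpow_pos_of_pos hxt _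
      nlinarith
    have hGd : HasDerivAt (fun y : ℝ => ∫ z in (0:ℝ)..y, g z) (g (x t)) (x t) := by
      apply intervalIntegral.integral_hasDerivAt_right
        (g_intble α β k p q hα hβ hk hp hkp _ hxt.le)
      · exact ((by fun_prop : Measurable g).stronglyMeasurable).stronglyMeasurableAtFilter
      · apply ContinuousAt.rpow_const
        · have c1 : ContinuousAt (fun z : ℝ => z ^ p) (x t) :=
            Real.continuousAt_rpow_const _ _ (Or.inl hxt.ne')
          have c2 : ContinuousAt (fun z : ℝ => z ^ q) (x t) :=
            Real.continuousAt_rpow_const _ _ (Or.inl hxt.ne')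
          exact (continuousAt_const.mul c1).add (continuousAt_const.mul c2)
        · left; exact ne_of_gt hfpos
    have := hGd.comp t (hx t ht.1)
    have hsign : Real.sign (x t) = 1 := Real.sign_of_pos hxt
    have habs : |x t| = x t := abs_of_pos hxt
    have hval : g (x t) * (-(α * |x t| ^ p + β * |x t| ^ q) ^ k * Real.sign (x t)) = -1 := by
      rw [hsign, habs, mul_one, hg]
      have : (α * x t ^ p + β * x t ^ q) ^ (-k) * (α * x t ^ p + β * x t ^ q) ^ k = 1 := by
        rw [← Real.rpow_add hfpos, neg_add_cancel, Real.rpow_zero]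
      rw [mul_neg, this]
    rw [hval] at this
    exact this
  have hint : ∫ t in (0:ℝ)..T, (-1 : ℝ) = V T - V 0 :=
    intervalIntegral.integral_eq_sub_of_hasDerivAt hVderiv intervalIntegrable_const
  have hV0 : V 0 = T := by rw [hV, hTdef, habs0]
  have hVT : V T = 0 := by
    have : (T - 0) • (-1 : ℝ) = V T - V 0 := by
      rw [← hint, intervalIntegral.integral_const]
    rw [hV0] at this
    simp at this
    linarith
  have hxT : 0 < x T := hpos T ⟨hT0, le_refl T⟩
  have hVTpos : 0 < V T := by
    apply intervalIntegral.intervalIntegral_pos_of_pos_on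
      (g_intble α β k p q hα hβ hk hp hkp _ hxT.le)
    · intro z hz
      have h1 : 0 < z ^ p := Real.rpow_pos_of_pos hz.1 _
      have h2 : 0 < z ^ q := Real.rpow_pos_of_pos hz.1 _
      exact Real.rpow_pos_of_pos (by nlinarith) _
    · exact hxT
  linarith


/-- Finite-time stability of `ẋ = -(α|x|^p + β|x|^q)^k sign(x)`: the solution
from initial condition `x 0` vanishes after the separation-of-variables time
`T(x 0) = ∫₀^{|x 0|} (α z^p + β z^q)^(-k) dz`. -/
theorem settling_time_bound_scalar
    (α β k p q : ℝ) (hα : 0 < α) (hβ : 0 < β) (hk : 0 < k)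
    (hp : 0 < p) (hpq : p < q) (hkp : k * p < 1) (hkq : 1 < k * q)
    (x : ℝ → ℝ)
    (hx : ∀ t : ℝ, 0 ≤ t →
      HasDerivAt x (-(α * |x t| ^ p + β * |x t| ^ q) ^ k * Real.sign (x t)) t) :
    ∀ t : ℝ, (∫ z in (0:ℝ)..|x 0|, (α * z ^ p + β * z ^ q) ^ (-k)) ≤ t → x t = 0 := by
  have hq : 0 < q := hp.trans hpq
  intro t ht
  set T : ℝ := ∫ z in (0:ℝ)..|x 0|, (α * z ^ p + β * z ^ q) ^ (-k) with hTdef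
  have hgnonneg : ∀ z ∈ Set.Icc (0:ℝ) |x 0|, 0 ≤ (α * z ^ p + β * z ^ q) ^ (-k) := by
    intro z hz
    have h1 : 0 ≤ z ^ p := Real.rpow_nonneg hz.1 _
    have h2 : 0 ≤ z ^ q := Real.rpow_nonneg hz.1 _
    exact Real.rpow_nonneg (by nlinarith) _
  have hT0 : 0 ≤ T := intervalIntegral.integral_nonneg (abs_nonneg _) hgnonneg
  -- find a zero in [0, T]
  have hzero : ∃ s ∈ Set.Icc (0:ℝ) T, x s = 0 := by
    by_contra hcon
    push_neg at hcon
    have hcont : ContinuousOn x (Set.Icc 0 T) := fun u hu =>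
      (hx u hu.1).continuousAt.continuousWithinAt
    -- x has constant sign on [0,T]
    rcases lt_trichotomy (x 0) 0 with hneg | h0 | hposs
    · -- all negative; apply no_all_pos to -x
      have hallneg : ∀ u ∈ Set.Icc (0:ℝ) T, x u < 0 := by
        intro u hu
        rcases lt_trichotomy (x u) 0 with h | h | h
        · exact h
        · exact absurd h (hcon u hu)
        · exfalso
          have h0mem : (0:ℝ) ∈ Set.Icc (x 0) (x u) := ⟨hneg.le, h.le⟩
          obtain ⟨c, hc, hcx⟩ := intermediate_value_Icc hu.1 (hcont.mono (Set.Icc_subset_Icc_right hu.2)) h0mem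
          exact hcon c ⟨hc.1, hc.2.trans hu.2⟩ hcx
      refine no_all_pos α β k p q hα hβ hk hp hq hkp (fun u => - x u) ?_ ?_
      · intro u hu
        have := (hx u hu).neg
        have heq : -(-(α * |x u| ^ p + β * |x u| ^ q) ^ k * Real.sign (x u))
            = -(α * |(-x u)| ^ p + β * |(-x u)| ^ q) ^ k * Real.sign (-x u) := by
          rw [abs_neg, Real.sign_neg]; ring
        rw [heq] at this
        exact this
      · intro u hu
        simp only [abs_neg] at hu
        have := hallneg u hu
        show (0:ℝ) < -x u
        linarith
    · exact hcon 0 ⟨le_refl 0, hT0⟩ h0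
    · -- all positive
      have hallpos : ∀ u ∈ Set.Icc (0:ℝ) T, 0 < x u := by
        intro u hu
        rcases lt_trichotomy (x u) 0 with h | h | h
        · exfalso
          have h0mem : (0:ℝ) ∈ Set.Icc (x u) (x 0) := ⟨h.le, hposs.le⟩
          obtain ⟨c, hc, hcx⟩ := intermediate_value_Icc' hu.1 (hcont.mono (Set.Icc_subset_Icc_right hu.2)) h0mem
          exact hcon c ⟨hc.1, hc.2.trans hu.2⟩ hcx
        · exact absurd h (hcon u hu)
        · exact h
      exact no_all_pos α β k p q hα hβ hk hp hq hkp x hx hallpos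
  obtain ⟨s, hs, hxs⟩ := hzero
  exact stays_zero α β k p q hα hβ hk hp hq x hx s t hs.1 (hs.2.trans ht) hxs
end

section
/- Let N ≥ 1 and let Q be a real N×N matrix that is symmetric and positive semidefinite, satisfies Q ⬝ 𝟙 = 0 where 𝟙 is the all-ones vector, and whose kernel consists only of constant vectors (i.e., for every x ∈ ℝ^N, Q ⬝ x = 0 implies x = c·𝟙 for some real c). Let b : Fin N → ℝ with b i ≥ 0 for all i and b i₀ > 0 for at least one index i₀. Then the matrix M := Q + diagonal(b) is symmetric positive definite. -/
/-!
Both `Q` and `diagonal b` are positive semidefinite, and a positive semidefinite matrix kills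
every vector on which its quadratic form vanishes. So if `xᵀ (Q + diagonal b) x = 0`, then
`Q x = 0`, making `x` constant, and `bᵢ xᵢ = 0` for all `i`; a single `bᵢ > 0` forces that
constant to be `0`.
-/

open Matrix
open scoped ComplexOrder

namespace Matrix.PosSemidef

variable {n 𝕜 : Type*} [Fintype n] [RCLike 𝕜]

theorem posDef_add_of_common_null_vector_eq_zero {A B : Matrix n n 𝕜}
    (hA : A.PosSemidef) (hB : B.PosSemidef)
    (hker : ∀ x, A *ᵥ x = 0 → B *ᵥ x = 0 → x = 0) : (A + B).PosDef := by
  refine posDef_iff_dotProduct_mulVec.mpr ⟨(hA.add hB).isHermitian, fun x hx => ?_⟩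
  rw [add_mulVec, dotProduct_add]
  have hAx := hA.dotProduct_mulVec_nonneg x
  have hBx := hB.dotProduct_mulVec_nonneg x
  refine lt_of_le_of_ne (add_nonneg hAx hBx) fun hzero => hx ?_
  obtain ⟨hA0, hB0⟩ := (add_eq_zero_iff_of_nonneg hAx hBx).mp hzero.symm
  exact hker x ((hA.dotProduct_mulVec_zero_iff x).mp hA0) ((hB.dotProduct_mulVec_zero_iff x).mp hB0)

end Matrix.PosSemidef

theorem laplacian_plus_diagonal_posDef_general
    (N : ℕ)
    (Q : Matrix (Fin N) (Fin N) ℝ)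
    (hpsd : Q.PosSemidef)
    (hker : ∀ x : Fin N → ℝ, Q.mulVec x = 0 → ∃ c : ℝ, ∀ i, x i = c)
    (b : Fin N → ℝ) (hb : ∀ i, 0 ≤ b i) (hb0 : ∃ i, 0 < b i) :
    (Q + Matrix.diagonal b).IsSymm ∧ (Q + Matrix.diagonal b).PosDef := by
  have hD : (diagonal b).PosSemidef := PosSemidef.diagonal hb
  refine ⟨isHermitian_iff_isSymm.mp (hpsd.add hD).isHermitian,
    hpsd.posDef_add_of_common_null_vector_eq_zero hD fun x hQx hDx => ?_⟩
  obtain ⟨c, hc⟩ := hker x hQx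
  obtain ⟨i, hi⟩ := hb0
  have hbc : b i * c = 0 := by simpa [mulVec_diagonal, hc] using congrFun hDx i
  have hc0 : c = 0 := (mul_eq_zero.mp hbc).resolve_left hi.ne'
  funext j
  simp [hc, hc0]

/-- Lemma 1: if `Q` is the Laplacian of a connected weighted undirected graph
(symmetric, positive semidefinite, `Q 𝟙 = 0`, kernel spanned by the all-ones
vector) and `b` has nonnegative entries with at least one positive entry, then
`M = Q + diag(b)` is symmetric positive definite. -/
theorem laplacian_plus_diagonal_posDef
    (N : ℕ) (hN : 1 ≤ N)
    (Q : Matrix (Fin N) (Fin N) ℝ)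
    (hsymm : Q.IsSymm)
    (hpsd : Q.PosSemidef)
    (hrow : Q.mulVec (fun _ => (1 : ℝ)) = 0)
    (hker : ∀ x : Fin N → ℝ, Q.mulVec x = 0 → ∃ c : ℝ, ∀ i, x i = c)
    (b : Fin N → ℝ) (hb : ∀ i, 0 ≤ b i) (hb0 : ∃ i, 0 < b i) :
    (Q + Matrix.diagonal b).IsSymm ∧ (Q + Matrix.diagonal b).PosDef :=
  laplacian_plus_diagonal_posDef_general N Q hpsd hker b hb hb0
end

section
/- Let n ≥ 1 be a natural number, let a₁, …, aₙ be strictly positive real numbers, and let α, β, p, q, k > 0. Then (1/n) · Σᵢ aᵢ · (α·aᵢ^p + β·aᵢ^q)^k ≥ ((1/n) · Σᵢ aᵢ) · (α·((1/n)·Σᵢ aᵢ)^p + β·((1/n)·Σᵢ aᵢ)^q)^k. -/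
open Real Finset

open Set in

theorem aux_convex (α β p q k : ℝ) (hα : 0 < α) (hβ : 0 < β)
    (hp : 0 < p) (hq : 0 < q) (hk : 0 < k) :
    ConvexOn ℝ (Set.Ioi (0:ℝ)) (fun x : ℝ => x * (α * x ^ p + β * x ^ q) ^ k) := by
  set F' : ℝ → ℝ := fun x =>
    1 * (α * x ^ p + β * x ^ q) ^ k +
      x * ((α * (p * x ^ (p - 1)) + β * (q * x ^ (q - 1))) * k *
        (α * x ^ p + β * x ^ q) ^ (k - 1)) with hF'def
  set F'' : ℝ → ℝ := fun x =>
    1 * ((α * (p * x ^ (p - 1)) + β * (q * x ^ (q - 1))) * k *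
        (α * x ^ p + β * x ^ q) ^ (k - 1)) +
      (1 * ((α * (p * x ^ (p - 1)) + β * (q * x ^ (q - 1))) * k *
          (α * x ^ p + β * x ^ q) ^ (k - 1)) +
        x * ((α * (p * ((p - 1) * x ^ (p - 1 - 1))) + β * (q * ((q - 1) * x ^ (q - 1 - 1)))) * k *
            (α * x ^ p + β * x ^ q) ^ (k - 1) +
          (α * (p * x ^ (p - 1)) + β * (q * x ^ (q - 1))) * k *
            ((α * (p * x ^ (p - 1)) + β * (q * x ^ (q - 1))) * (k - 1) *
              (α * x ^ p + β * x ^ q) ^ (k - 1 - 1)))) with hF''def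
  have hder1 : ∀ x : ℝ, 0 < x →
      HasDerivAt (fun x : ℝ => x * (α * x ^ p + β * x ^ q) ^ k) (F' x) x := by
    intro x hx
    have hxne : x ≠ 0 := ne_of_gt hx
    have hu : HasDerivAt (fun x : ℝ => α * x ^ p + β * x ^ q)
        (α * (p * x ^ (p - 1)) + β * (q * x ^ (q - 1))) x :=
      (((Real.hasDerivAt_rpow_const (Or.inl hxne)).const_mul α).add
        ((Real.hasDerivAt_rpow_const (Or.inl hxne)).const_mul β))
    have hupos : (0:ℝ) < α * x ^ p + β * x ^ q := by positivity
    have hw : HasDerivAt (fun x : ℝ => (α * x ^ p + β * x ^ q) ^ k)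
        ((α * (p * x ^ (p - 1)) + β * (q * x ^ (q - 1))) * k *
          (α * x ^ p + β * x ^ q) ^ (k - 1)) x :=
      hu.rpow_const (Or.inl (ne_of_gt hupos))
    exact (hasDerivAt_id x).mul hw
  have hder2 : ∀ x : ℝ, 0 < x → HasDerivAt F' (F'' x) x := by
    intro x hx
    have hxne : x ≠ 0 := ne_of_gt hx
    have hu : HasDerivAt (fun x : ℝ => α * x ^ p + β * x ^ q)
        (α * (p * x ^ (p - 1)) + β * (q * x ^ (q - 1))) x :=
      (((Real.hasDerivAt_rpow_const (Or.inl hxne)).const_mul α).add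
        ((Real.hasDerivAt_rpow_const (Or.inl hxne)).const_mul β))
    have hupos : (0:ℝ) < α * x ^ p + β * x ^ q := by positivity
    have hw : HasDerivAt (fun x : ℝ => (α * x ^ p + β * x ^ q) ^ k)
        ((α * (p * x ^ (p - 1)) + β * (q * x ^ (q - 1))) * k *
          (α * x ^ p + β * x ^ q) ^ (k - 1)) x :=
      hu.rpow_const (Or.inl (ne_of_gt hupos))
    have hv : HasDerivAt (fun x : ℝ => α * (p * x ^ (p - 1)) + β * (q * x ^ (q - 1)))
        (α * (p * ((p - 1) * x ^ (p - 1 - 1))) + β * (q * ((q - 1) * x ^ (q - 1 - 1)))) x :=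
      ((((Real.hasDerivAt_rpow_const (Or.inl hxne)).const_mul p).const_mul α).add
        (((Real.hasDerivAt_rpow_const (Or.inl hxne)).const_mul q).const_mul β))
    have hw2 : HasDerivAt (fun x : ℝ => (α * x ^ p + β * x ^ q) ^ (k - 1))
        ((α * (p * x ^ (p - 1)) + β * (q * x ^ (q - 1))) * (k - 1) *
          (α * x ^ p + β * x ^ q) ^ (k - 1 - 1)) x :=
      hu.rpow_const (Or.inl (ne_of_gt hupos))
    have hm : HasDerivAt (fun x : ℝ => (α * (p * x ^ (p - 1)) + β * (q * x ^ (q - 1))) * k *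
        (α * x ^ p + β * x ^ q) ^ (k - 1))
        ((α * (p * ((p - 1) * x ^ (p - 1 - 1))) + β * (q * ((q - 1) * x ^ (q - 1 - 1)))) * k *
            (α * x ^ p + β * x ^ q) ^ (k - 1) +
          (α * (p * x ^ (p - 1)) + β * (q * x ^ (q - 1))) * k *
            ((α * (p * x ^ (p - 1)) + β * (q * x ^ (q - 1))) * (k - 1) *
              (α * x ^ p + β * x ^ q) ^ (k - 1 - 1))) x :=
      (hv.mul_const k).mul hw2
    exact (hw.const_mul 1).add ((hasDerivAt_id x).mul hm)
  have hF''eq : ∀ x : ℝ, 0 < x → F'' x =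
      k * (α * x ^ p + β * x ^ q) ^ (k - 1 - 1) *
        (p * (1 + k * p) * (α * x ^ p) ^ 2 + q * (1 + k * q) * (β * x ^ q) ^ 2 +
          (p + q + (p - q) ^ 2 + 2 * p * q * k) * (α * x ^ p * (β * x ^ q))) / x := by
    intro x hx
    have hxne : x ≠ 0 := ne_of_gt hx
    have hupos : (0:ℝ) < α * x ^ p + β * x ^ q := by positivity
    have h1 : (α * x ^ p + β * x ^ q) ^ (k - 1) =
        (α * x ^ p + β * x ^ q) ^ (k - 1 - 1) * (α * x ^ p + β * x ^ q) := by
      rw [Real.rpow_sub hupos (k - 1) 1, Real.rpow_one,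
        div_mul_cancel₀ _ (ne_of_gt hupos)]
    have h2 : x ^ (p - 1) = x ^ p / x := by
      rw [Real.rpow_sub hx, Real.rpow_one]
    have h3 : x ^ (q - 1) = x ^ q / x := by
      rw [Real.rpow_sub hx, Real.rpow_one]
    have h4 : x ^ (p - 1 - 1) = x ^ p / x / x := by
      rw [Real.rpow_sub hx, Real.rpow_sub hx, Real.rpow_one]
    have h5 : x ^ (q - 1 - 1) = x ^ q / x / x := by
      rw [Real.rpow_sub hx, Real.rpow_sub hx, Real.rpow_one]
    rw [hF''def]
    simp only [h1, h2, h3, h4, h5]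
    field_simp
    ring
  have hF''nonneg : ∀ x : ℝ, x ∈ Set.Ioi (0:ℝ) → 0 ≤ F'' x := by
    intro x hx
    rw [hF''eq x hx]
    have hx' : (0:ℝ) < x := hx
    positivity
  have hIoi : interior (Set.Ioi (0:ℝ)) = Set.Ioi 0 := interior_Ioi
  have hdf : ∀ x ∈ Set.Ioi (0:ℝ), deriv (fun x : ℝ => x * (α * x ^ p + β * x ^ q) ^ k) x = F' x :=
    fun x hx => (hder1 x hx).deriv
  have hev : ∀ x ∈ Set.Ioi (0:ℝ),
      deriv (fun x : ℝ => x * (α * x ^ p + β * x ^ q) ^ k) =ᶠ[nhds x] F' := by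
    intro x hx
    filter_upwards [isOpen_Ioi.mem_nhds hx] with y hy
    exact hdf y hy
  have hder2' : ∀ x ∈ Set.Ioi (0:ℝ),
      HasDerivAt (deriv (fun x : ℝ => x * (α * x ^ p + β * x ^ q) ^ k)) (F'' x) x :=
    fun x hx => (hder2 x hx).congr_of_eventuallyEq (hev x hx)
  apply convexOn_of_deriv2_nonneg (convex_Ioi 0)
  · exact fun x hx => ((hder1 x hx).differentiableAt).continuousAt.continuousWithinAt
  · rw [hIoi]
    exact fun x hx => ((hder1 x hx).differentiableAt).differentiableWithinAt
  · rw [hIoi]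
    exact fun x hx => ((hder2' x hx).differentiableAt).differentiableWithinAt
  · rw [hIoi]
    intro x hx
    have : deriv^[2] (fun x : ℝ => x * (α * x ^ p + β * x ^ q) ^ k) x =
        deriv (deriv (fun x : ℝ => x * (α * x ^ p + β * x ^ q) ^ k)) x := by
      simp [Function.iterate_succ_apply']
    rw [this, (hder2' x hx).deriv]
    exact hF''nonneg x hx

/-- Appendix Lemma 2 (Jensen-type inequality): for positive numbers `a i` and
positive parameters `α, β, p, q, k`,
`(1/n) Σ aᵢ (α aᵢ^p + β aᵢ^q)^k ≥ ((1/n) Σ aᵢ)(α ((1/n) Σ aᵢ)^p + β ((1/n) Σ aᵢ)^q)^k`. -/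
theorem jensen_type_sum_inequality
    (n : ℕ) (hn : 1 ≤ n) (a : Fin n → ℝ) (ha : ∀ i, 0 < a i)
    (α β p q k : ℝ) (hα : 0 < α) (hβ : 0 < β)
    (hp : 0 < p) (hq : 0 < q) (hk : 0 < k) :
    ((1 / (n : ℝ)) * ∑ i, a i) *
        (α * ((1 / (n : ℝ)) * ∑ i, a i) ^ p + β * ((1 / (n : ℝ)) * ∑ i, a i) ^ q) ^ k ≤
      (1 / (n : ℝ)) * ∑ i, a i * (α * (a i) ^ p + β * (a i) ^ q) ^ k := by
  have hconv := aux_convex α β p q k hα hβ hp hq hk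
  have hn0 : (0:ℝ) < (n:ℝ) := by exact_mod_cast hn
  have h₁ : ∑ _i : Fin n, (1 / (n:ℝ)) = 1 := by
    rw [Finset.sum_const, Finset.card_univ, Fintype.card_fin, nsmul_eq_mul]
    field_simp
  have key := hconv.map_sum_le (t := Finset.univ) (w := fun _ => 1 / (n:ℝ))
    (p := a) (fun i _ => by positivity) h₁ (fun i _ => ha i)
  simp only [smul_eq_mul] at key
  rw [← Finset.mul_sum, ← Finset.mul_sum] at key
  exact key
end

section
/- Let N ≥ 1, let M be a real N×N symmetric matrix, and let λ > 0 satisfy λ·‖y‖² ≤ yᵀ M y for every y ∈ ℝ^N. Let α, β, p, q, k > 0, ζ ≥ 0, let κ₁, …, κ_N and κ be reals with κᵢ ≥ κ > 0 for all i, and let u₀ ∈ ℝ with |u₀| ≤ κ·ζ. For v ∈ ℝ^N with v ≠ 0, set e := M ⬝ v ∈ ℝ^N and V := (1/N)·√(λ · vᵀ M v). Then (√λ / (N·√(vᵀ M v))) · Σᵢ eᵢ · ( −κᵢ·((α·|eᵢ|^p + β·|eᵢ|^q)^k + ζ)·sign(eᵢ) − u₀ ) ≤ −(κ·λ/N) ·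 (α·V^p + β·V^q)^k. -/
/-!
Writing `g x = (α x ^ p + β x ^ q) ^ k`, the `ζ`-part of the gain absorbs the disturbance `u₀`, so
the `i`-th summand is at most `-κ |eᵢ| g |eᵢ|`. Weighted AM–GM gives
`x g x ≥ V g V (x / V) ^ s` with `s ≥ 1`, and Bernoulli's inequality turns this into a supporting
line of nonnegative slope for `x ↦ x g x` at `V`. Cauchy–Schwarz gives
`∑ |eᵢ| ≥ ‖e‖ ≥ √(λ vᵀMv) = N V`, hence `∑ |eᵢ| g |eᵢ| ≥ N V g V`.
-/

open Matrix Real Finset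

lemma Real.mul_sign_eq_abs (x : ℝ) : x * Real.sign x = |x| := by
  rcases lt_trichotomy x 0 with h | rfl | h
  · rw [Real.sign_of_neg h, abs_of_neg h, mul_neg_one]
  · simp
  · rw [Real.sign_of_pos h, abs_of_pos h, mul_one]

lemma mul_dotProduct_mulVec_le_mulVec_dotProduct_mulVec {n : Type*} [Fintype n]
    {M : Matrix n n ℝ} {lam : ℝ} (hlam : 0 ≤ lam)
    (hquad : ∀ y : n → ℝ, lam * (y ⬝ᵥ y) ≤ y ⬝ᵥ M *ᵥ y) (v : n → ℝ) :
    lam * (v ⬝ᵥ M *ᵥ v) ≤ M *ᵥ v ⬝ᵥ M *ᵥ v := by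
  set e := M *ᵥ v
  have hcs : (v ⬝ᵥ e) ^ 2 ≤ (v ⬝ᵥ v) * (e ⬝ᵥ e) := by
    simpa only [dotProduct, sq] using sum_mul_sq_le_sq_mul_sq univ v e
  have hee : 0 ≤ e ⬝ᵥ e := by simpa using dotProduct_self_star_nonneg e
  rcases le_or_gt (v ⬝ᵥ e) 0 with hS | hS
  · nlinarith
  · nlinarith [hquad v]

lemma sqrt_dotProduct_self_le_sum_abs {n : Type*} [Fintype n] (x : n → ℝ) :
    √(x ⬝ᵥ x) ≤ ∑ i, |x i| := by
  rw [Real.sqrt_le_iff]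
  refine ⟨sum_nonneg fun i _ => abs_nonneg (x i), ?_⟩
  calc x ⬝ᵥ x = ∑ i, |x i| ^ 2 := by simp only [dotProduct, sq, abs_mul_abs_self]
    _ ≤ (∑ i, |x i|) ^ 2 := sum_sq_le_sq_sum_of_nonneg fun i _ => abs_nonneg (x i)

lemma add_mul_rpow_div_le {A B p q t : ℝ} (hA : 0 < A) (hB : 0 < B) (hp : 0 ≤ p) (hq : 0 ≤ q)
    (ht : 0 ≤ t) :
    (A + B) * t ^ ((p * A + q * B) / (A + B)) ≤ A * t ^ p + B * t ^ q := by
  have hAB : 0 < A + B := add_pos hA hB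
  have hgm := geom_mean_le_arith_mean2_weighted (div_pos hA hAB).le (div_pos hB hAB).le
    (rpow_nonneg ht p) (rpow_nonneg ht q) (by field_simp)
  rw [← rpow_mul ht, ← rpow_mul ht, ← rpow_add_of_nonneg ht (by positivity) (by positivity)]
    at hgm
  calc (A + B) * t ^ ((p * A + q * B) / (A + B))
      = (A + B) * t ^ (p * (A / (A + B)) + q * (B / (A + B))) := by
        congr 2; field_simp
    _ ≤ (A + B) * (A / (A + B) * t ^ p + B / (A + B) * t ^ q) := by gcongr
    _ = A * t ^ p + B * t ^ q := by field_simp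

lemma exists_supporting_line_mul_add_rpow_rpow {α β p q k V : ℝ} (hα : 0 < α) (hβ : 0 < β)
    (hp : 0 ≤ p) (hq : 0 ≤ q) (hk : 0 ≤ k) (hV : 0 < V) :
    ∃ c ≥ 0, ∀ x ≥ 0,
      V * (α * V ^ p + β * V ^ q) ^ k + c * (x - V) ≤ x * (α * x ^ p + β * x ^ q) ^ k := by
  set A := α * V ^ p
  set B := β * V ^ q
  have hA : 0 < A := by positivity
  have hB : 0 < B := by positivity
  set w := (p * A + q * B) / (A + B)
  have hs : 1 ≤ 1 + w * k := le_add_of_nonneg_right (by positivity)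
  refine ⟨(A + B) ^ k * (1 + w * k), by positivity, fun x hx => ?_⟩
  obtain ⟨t, ht, rfl⟩ : ∃ t ≥ 0, x = V * t := ⟨x / V, by positivity, by field_simp⟩
  have hbase : α * (V * t) ^ p + β * (V * t) ^ q = A * t ^ p + B * t ^ q := by
    rw [mul_rpow hV.le ht, mul_rpow hV.le ht]
    ring
  rw [hbase]
  calc V * (A + B) ^ k + (A + B) ^ k * (1 + w * k) * (V * t - V)
      = V * (A + B) ^ k * (1 + (1 + w * k) * (t - 1)) := by ring
    _ ≤ V * (A + B) ^ k * (1 + (t - 1)) ^ (1 + w * k) := by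
        gcongr
        exact one_add_mul_self_le_rpow_one_add (by linarith) hs
    _ = V * t * ((A + B) * t ^ w) ^ k := by
        rw [add_sub_cancel, mul_rpow (by positivity) (by positivity), ← rpow_mul ht,
          rpow_one_add' ht (by positivity)]
        ring
    _ ≤ V * t * (A * t ^ p + B * t ^ q) ^ k := by
        gcongr
        exact add_mul_rpow_div_le hA hB hp hq ht

lemma card_mul_le_sum_of_supporting_line {ι : Type*} (s : Finset ι) {f : ℝ → ℝ} {a c : ℝ}
    (hc : 0 ≤ c) (hf : ∀ x ≥ 0, f a + c * (x - a) ≤ f x) {x : ι → ℝ} (hx : ∀ i ∈ s, 0 ≤ x i)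
    (hsum : #s * a ≤ ∑ i ∈ s, x i) :
    #s * f a ≤ ∑ i ∈ s, f (x i) :=
  calc #s * f a ≤ #s * f a + c * (∑ i ∈ s, x i - #s * a) :=
        le_add_of_nonneg_right (mul_nonneg hc (sub_nonneg.mpr hsum))
    _ = ∑ i ∈ s, (f a + c * (x i - a)) := by
        rw [sum_add_distrib, ← mul_sum, sum_sub_distrib]
        simp only [sum_const, nsmul_eq_mul]
    _ ≤ ∑ i ∈ s, f (x i) := sum_le_sum fun i hi => hf (x i) (hx i hi)

lemma mul_neg_mul_sign_sub_le {x G ζ κ κ' u₀ : ℝ} (hG : 0 ≤ G) (hζ : 0 ≤ ζ) (hκ : κ ≤ κ')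
    (hu₀ : |u₀| ≤ κ * ζ) :
    x * (-κ' * (G + ζ) * Real.sign x - u₀) ≤ -κ * (|x| * G) := by
  have hu : -(x * u₀) ≤ |x| * (κ * ζ) :=
    calc -(x * u₀) ≤ |x| * |u₀| := by rw [← abs_mul]; exact neg_le_abs _
      _ ≤ |x| * (κ * ζ) := by gcongr
  have hgain : κ * ((G + ζ) * |x|) ≤ κ' * ((G + ζ) * |x|) :=
    mul_le_mul_of_nonneg_right hκ (by positivity)
  linear_combination (-κ' * (G + ζ)) * Real.mul_sign_eq_abs x + hu + hgain

theorem observer_lyapunov_derivative_bound_general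
    (N : ℕ) (hN : 1 ≤ N) (M : Matrix (Fin N) (Fin N) ℝ)
    (lam : ℝ) (hlam : 0 < lam)
    (hquad : ∀ y : Fin N → ℝ, lam * (y ⬝ᵥ y) ≤ y ⬝ᵥ M.mulVec y)
    (α β p q k : ℝ) (hα : 0 < α) (hβ : 0 < β)
    (hp : 0 < p) (hq : 0 < q) (hk : 0 < k)
    (ζ : ℝ) (hζ : 0 ≤ ζ)
    (κs : Fin N → ℝ) (κ : ℝ) (hκ : 0 < κ) (hκs : ∀ i, κ ≤ κs i)
    (u₀ : ℝ) (hu₀ : |u₀| ≤ κ * ζ)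
    (v : Fin N → ℝ) (hv : v ≠ 0)
    (e : Fin N → ℝ) (he : e = M.mulVec v)
    (V : ℝ) (hV : V = (1 / (N : ℝ)) * Real.sqrt (lam * (v ⬝ᵥ M.mulVec v))) :
    (Real.sqrt lam / ((N : ℝ) * Real.sqrt (v ⬝ᵥ M.mulVec v))) *
        ∑ i, e i * (-(κs i) * ((α * |e i| ^ p + β * |e i| ^ q) ^ k + ζ) *
          Real.sign (e i) - u₀) ≤
      -(κ * lam / (N : ℝ)) * (α * V ^ p + β * V ^ q) ^ k := by
  have hNpos : (0 : ℝ) < N := Nat.cast_pos.mpr hN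
  set S := v ⬝ᵥ M *ᵥ v
  have hS : 0 < S := by
    have hvv : 0 < v ⬝ᵥ v := by simpa using dotProduct_self_star_pos_iff.mpr hv
    exact (mul_pos hlam hvv).trans_le (hquad v)
  have hVpos : 0 < V := by rw [hV]; positivity
  have hNV : N * V ≤ ∑ i, |e i| :=
    calc (N : ℝ) * V = √(lam * S) := by rw [hV]; field_simp
      _ ≤ √(e ⬝ᵥ e) := by
        rw [he]
        exact sqrt_le_sqrt (mul_dotProduct_mulVec_le_mulVec_dotProduct_mulVec hlam.le hquad v)
      _ ≤ ∑ i, |e i| := sqrt_dotProduct_self_le_sum_abs e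
  obtain ⟨c, hc, hline⟩ :=
    exists_supporting_line_mul_add_rpow_rpow hα hβ hp.le hq.le hk.le hVpos
  have hgain : N * (V * (α * V ^ p + β * V ^ q) ^ k) ≤
      ∑ i, |e i| * (α * |e i| ^ p + β * |e i| ^ q) ^ k := by
    simpa using card_mul_le_sum_of_supporting_line univ
      (f := fun x => x * (α * x ^ p + β * x ^ q) ^ k) hc hline (fun i _ => abs_nonneg (e i))
      (by simpa using hNV)
  have hterms : ∑ i, e i * (-(κs i) * ((α * |e i| ^ p + β * |e i| ^ q) ^ k + ζ) *
      Real.sign (e i) - u₀) ≤ -κ * ∑ i, |e i| * (α * |e i| ^ p + β * |e i| ^ q) ^ k := by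
    rw [mul_sum]
    exact sum_le_sum fun i _ => mul_neg_mul_sign_sub_le (by positivity) hζ (hκs i) hu₀
  have hcoef : √lam / (N * √S) * (N * V) = lam / N := by
    rw [hV, sqrt_mul hlam.le]
    field_simp
    rw [sq_sqrt hlam.le]
  calc √lam / (N * √S) * ∑ i, e i * (-(κs i) * ((α * |e i| ^ p + β * |e i| ^ q) ^ k + ζ) *
          Real.sign (e i) - u₀)
      ≤ √lam / (N * √S) * (-κ * ∑ i, |e i| * (α * |e i| ^ p + β * |e i| ^ q) ^ k) := by
        gcongr
    _ ≤ √lam / (N * √S) * (-κ * (N * (V * (α * V ^ p + β * V ^ q) ^ k))) :=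
        mul_le_mul_of_nonneg_left (mul_le_mul_of_nonpos_left hgain (by linarith))
          (by positivity)
    _ = -(κ * lam / N) * (α * V ^ p + β * V ^ q) ^ k := by
        linear_combination (-κ * (α * V ^ p + β * V ^ q) ^ k) * hcoef

/-- Key Lyapunov-derivative inequality in the proof of Theorem 3: for the
candidate Lyapunov function `V = (1/N)√(λ vᵀMv)` along the disturbed observer
error dynamics,
`(√λ/(N√(vᵀMv))) Σ eᵢ(-κᵢ((α|eᵢ|^p+β|eᵢ|^q)^k + ζ) sign(eᵢ) - u₀)
  ≤ -(κλ/N)(α V^p + β V^q)^k` where `e = M v`. -/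
theorem observer_lyapunov_derivative_bound
    (N : ℕ) (hN : 1 ≤ N) (M : Matrix (Fin N) (Fin N) ℝ) (hsymm : M.IsSymm)
    (lam : ℝ) (hlam : 0 < lam)
    (hquad : ∀ y : Fin N → ℝ, lam * (y ⬝ᵥ y) ≤ y ⬝ᵥ M.mulVec y)
    (α β p q k : ℝ) (hα : 0 < α) (hβ : 0 < β)
    (hp : 0 < p) (hq : 0 < q) (hk : 0 < k)
    (ζ : ℝ) (hζ : 0 ≤ ζ)
    (κs : Fin N → ℝ) (κ : ℝ) (hκ : 0 < κ) (hκs : ∀ i, κ ≤ κs i)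
    (u₀ : ℝ) (hu₀ : |u₀| ≤ κ * ζ)
    (v : Fin N → ℝ) (hv : v ≠ 0)
    (e : Fin N → ℝ) (he : e = M.mulVec v)
    (V : ℝ) (hV : V = (1 / (N : ℝ)) * Real.sqrt (lam * (v ⬝ᵥ M.mulVec v))) :
    (Real.sqrt lam / ((N : ℝ) * Real.sqrt (v ⬝ᵥ M.mulVec v))) *
        ∑ i, e i * (-(κs i) * ((α * |e i| ^ p + β * |e i| ^ q) ^ k + ζ) *
          Real.sign (e i) - u₀) ≤
      -(κ * lam / (N : ℝ)) * (α * V ^ p + β * V ^ q) ^ k :=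
  observer_lyapunov_derivative_bound_general N hN M lam hlam hquad α β p q k hα hβ hp hq hk ζ hζ κs
    κ hκ hκs u₀ hu₀ v hv e he V hV
end

section
/- Let c > 0 and s, e_v ∈ ℝ. If e_v + ⌊ ⌊e_v⌉² + c·s ⌉^{1/2} = 0, then ⌊e_v⌉² = −c·s/2; equivalently, e_v = −⌊ c·s/2 ⌉^{1/2}. In particular, with s = α₁·⌊e_x⌉ + β₁·⌊e_x⌉³ for α₁, β₁ > 0 and e_x ∈ ℝ, the condition σ := e_v + ⌊ ⌊e_v⌉² + c·(α₁⌊e_x⌉ + β₁⌊e_x⌉³) ⌉^{1/2} = 0 implies e_v = −√(c/2) · (α₁·|e_x| + β₁·|e_x|³)^{1/2} · sign(e_x). (Characterization of the motion on the sliding surface σ = 0 of the fixed-time tracking controller.) -/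
open Real

/-- `⌊z⌉^r = |z|^r sign(z)` (signed power). -/
noncomputable def bpow (z r : ℝ) : ℝ := |z| ^ r * Real.sign z

lemma abs_mul_sign' (x : ℝ) : |x| * Real.sign x = x := by
  rcases lt_trichotomy x 0 with h | h | h
  · rw [Real.sign_of_neg h, abs_of_neg h]; ring
  · simp [h]
  · rw [Real.sign_of_pos h, abs_of_pos h]; ring

lemma abs_bpow (z r : ℝ) (hr : r ≠ 0) : |bpow z r| = |z| ^ r := by
  rcases eq_or_ne z 0 with h | h
  · simp [bpow, h, Real.zero_rpow hr]
  · rcases lt_trichotomy z 0 with hz | hz | hz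
    · rw [bpow, Real.sign_of_neg hz, abs_mul, abs_neg, abs_one, mul_one,
        abs_of_nonneg (Real.rpow_nonneg (abs_nonneg z) r)]
    · exact absurd hz h
    · rw [bpow, Real.sign_of_pos hz, abs_mul, abs_one, mul_one,
        abs_of_nonneg (Real.rpow_nonneg (abs_nonneg z) r)]

lemma sign_bpow (z r : ℝ) : Real.sign (bpow z r) = Real.sign z := by
  rcases lt_trichotomy z 0 with hz | hz | hz
  · have hp : (0:ℝ) < |z| ^ r := Real.rpow_pos_of_pos (abs_pos.mpr hz.ne) r
    rw [bpow, Real.sign_of_neg hz, Real.sign_of_neg (by nlinarith)]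
  · simp [bpow, hz]
  · have hp : (0:ℝ) < |z| ^ r := Real.rpow_pos_of_pos (abs_pos.mpr hz.ne') r
    rw [bpow, Real.sign_of_pos hz, Real.sign_of_pos (by nlinarith)]

lemma bpow_neg' (z r : ℝ) : bpow (-z) r = -bpow z r := by
  rw [bpow, bpow, abs_neg, Real.sign_neg]; ring

lemma bpow_bpow (z a b : ℝ) (ha : a ≠ 0) (hab : a * b = 1) :
    bpow (bpow z a) b = z := by
  rw [bpow, abs_bpow z a ha, sign_bpow, ← Real.rpow_mul (abs_nonneg z), hab,
    Real.rpow_one, abs_mul_sign']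

/-- Characterization of the motion on the sliding surface `σ = 0` of the
fixed-time tracking controller: if `e_v + ⌊⌊e_v⌉² + c s⌉^{1/2} = 0` then
`⌊e_v⌉² = -c s/2`, equivalently `e_v = -⌊c s/2⌉^{1/2}`; in particular, with
`s = α₁⌊e_x⌉ + β₁⌊e_x⌉³`, `e_v = -√(c/2)(α₁|e_x| + β₁|e_x|³)^{1/2} sign(e_x)`. -/
theorem sliding_surface_motion
    (c s e_v : ℝ) (hc : 0 < c)
    (h : e_v + bpow (bpow e_v 2 + c * s) (1 / 2) = 0) :
    bpow e_v 2 = -(c * s) / 2 ∧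
    e_v = -bpow (c * s / 2) (1 / 2) ∧
    ∀ α₁ β₁ e_x : ℝ, 0 < α₁ → 0 < β₁ →
      s = α₁ * bpow e_x 1 + β₁ * bpow e_x 3 →
      e_v = -Real.sqrt (c / 2) * (α₁ * |e_x| + β₁ * |e_x| ^ (3 : ℝ)) ^ ((1 : ℝ) / 2) *
        Real.sign e_x := by
  have he : e_v = -bpow (bpow e_v 2 + c * s) (1 / 2) := by linarith
  have h1 : bpow e_v 2 = -(bpow e_v 2 + c * s) := by
    conv_lhs => rw [he, bpow_neg', bpow_bpow _ (1/2) 2 (by norm_num) (by norm_num)]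
  have hfst : bpow e_v 2 = -(c * s) / 2 := by linarith
  have hcs : c * s / 2 = bpow (-e_v) 2 := by
    rw [bpow_neg']; linarith
  have hsnd : e_v = -bpow (c * s / 2) (1 / 2) := by
    rw [hcs, bpow_bpow _ 2 (1/2) (by norm_num) (by norm_num)]; ring
  refine ⟨hfst, hsnd, ?_⟩
  intro α₁ β₁ e_x hα hβ hs
  rcases eq_or_ne e_x 0 with hx | hx
  · have : c * s / 2 = 0 := by simp [hs, hx, bpow, Real.sign_zero]
    rw [hsnd, this, hx]
    simp [bpow, Real.sign_zero, Real.zero_rpow (show (1:ℝ)/2 ≠ 0 by norm_num)]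
  · set A : ℝ := α₁ * |e_x| + β₁ * |e_x| ^ (3 : ℝ) with hA
    have hAp : 0 < A := by
      have h1 : 0 < |e_x| := abs_pos.mpr hx
      have h3 : 0 < |e_x| ^ (3 : ℝ) := Real.rpow_pos_of_pos h1 3
      positivity
    have hs' : c * s / 2 = (c / 2 * A) * Real.sign e_x := by
      rw [hs, bpow, bpow, Real.rpow_one]; ring
    have hcA : 0 < c / 2 * A := by positivity
    have habs : |c * s / 2| = c / 2 * A := by
      rcases lt_trichotomy e_x 0 with hz | hz | hz
      · rw [hs', Real.sign_of_neg hz, abs_mul, abs_of_pos hcA]; simp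
      · exact absurd hz hx
      · rw [hs', Real.sign_of_pos hz, abs_mul, abs_of_pos hcA]; simp
    have hsign : Real.sign (c * s / 2) = Real.sign e_x := by
      rcases lt_trichotomy e_x 0 with hz | hz | hz
      · rw [hs', Real.sign_of_neg hz, Real.sign_of_neg (by nlinarith)]
      · exact absurd hz hx
      · rw [hs', Real.sign_of_pos hz, Real.sign_of_pos (by nlinarith)]
    rw [hsnd, bpow, habs, hsign,
      Real.mul_rpow (by positivity) hAp.le, Real.sqrt_eq_rpow]
    ring
end

section
/- Let α₁, β₁, α₂, β₂, γ₁, γ₂, T₁, T₂ > 0, let p', q', k' > 0 with k'·p' < 1 and k'·q' > 1, let ζ ≥ 0, and let Δ ∈ ℝ with |Δ| ≤ ζ. Let e_x, e_v ∈ ℝ, set w := ⌊e_v⌉² + (γ₁²/T₁²)·(α₁·⌊e_x⌉ + β₁·⌊e_x⌉³) and σ := e_v + ⌊w⌉^{1/2}, and assume w ≠ 0 and σ ≠ 0. Define the control u := −[ (γ₂/T₂)·(α₂·|σ|^{p'} + β₂·|σ|^{q'})^{k'} + (γ₁²/(2·T₁²))·(α₁ + 3·β₁·e_x²) + ζ ]·sign(σ).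 Then sign(σ) · [ (u + Δ) + ( |e_v|·(u + Δ) + (γ₁²/(2·T₁²))·(α₁ + 3·β₁·e_x²)·e_v ) / |w|^{1/2} ] ≤ −(γ₂/T₂)·(α₂·|σ|^{p'} + β₂·|σ|^{q'})^{k'}. (Reaching-phase inequality: the time derivative of |σ| along the closed-loop second-order tracking-error dynamics under the proposed fixed-time controller satisfies the predefined-time Lyapunov differential inequality.) -/
open Real

/-- Reaching-phase inequality of Theorem 4: the time derivative of `|σ|` along
the closed-loop second-order tracking-error dynamics under the proposed
fixed-time controller satisfies the predefined-time Lyapunov differential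
inequality. -/
theorem reaching_phase_inequality
    (α₁ β₁ α₂ β₂ γ₁ γ₂ T₁ T₂ : ℝ)
    (hα₁ : 0 < α₁) (hβ₁ : 0 < β₁) (hα₂ : 0 < α₂) (hβ₂ : 0 < β₂)
    (hγ₁ : 0 < γ₁) (hγ₂ : 0 < γ₂) (hT₁ : 0 < T₁) (hT₂ : 0 < T₂)
    (p' q' k' : ℝ) (hp' : 0 < p') (hq' : 0 < q') (hk' : 0 < k')
    (hkp' : k' * p' < 1) (hkq' : 1 < k' * q')
    (ζ : ℝ) (hζ : 0 ≤ ζ) (Δ : ℝ) (hΔ : |Δ| ≤ ζ)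
    (e_x e_v : ℝ)
    (w : ℝ) (hw_def : w = bpow e_v 2 + (γ₁ ^ 2 / T₁ ^ 2) * (α₁ * bpow e_x 1 + β₁ * bpow e_x 3))
    (σ : ℝ) (hσ_def : σ = e_v + bpow w (1 / 2))
    (hw : w ≠ 0) (hσ : σ ≠ 0)
    (u : ℝ)
    (hu : u = -((γ₂ / T₂) * (α₂ * |σ| ^ p' + β₂ * |σ| ^ q') ^ k' +
        (γ₁ ^ 2 / (2 * T₁ ^ 2)) * (α₁ + 3 * β₁ * e_x ^ 2) + ζ) * Real.sign σ) :
    Real.sign σ *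
        ((u + Δ) + (|e_v| * (u + Δ) + (γ₁ ^ 2 / (2 * T₁ ^ 2)) * (α₁ + 3 * β₁ * e_x ^ 2) * e_v) /
          |w| ^ ((1 : ℝ) / 2)) ≤
      -(γ₂ / T₂) * (α₂ * |σ| ^ p' + β₂ * |σ| ^ q') ^ k' := by
  have hσabs : 0 < |σ| := abs_pos.mpr hσ
  have hwabs : 0 < |w| := abs_pos.mpr hw
  have hr : (0:ℝ) < |w| ^ ((1:ℝ)/2) := Real.rpow_pos_of_pos hwabs _
  have hbase : 0 < α₂ * |σ| ^ p' + β₂ * |σ| ^ q' := by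
    have h1 := Real.rpow_pos_of_pos hσabs p'
    have h2 := Real.rpow_pos_of_pos hσabs q'
    positivity
  set K := (γ₂ / T₂) * (α₂ * |σ| ^ p' + β₂ * |σ| ^ q') ^ k' with hK
  have hKpos : 0 < K := by
    have := Real.rpow_pos_of_pos hbase k'
    positivity
  set G := (γ₁ ^ 2 / (2 * T₁ ^ 2)) * (α₁ + 3 * β₁ * e_x ^ 2) with hG
  have hGpos : 0 < G := by positivity
  set s := Real.sign σ with hs
  have hss : s * s = 1 := by
    rcases lt_or_gt_of_ne hσ with h | h
    · simp [hs, Real.sign_of_neg h]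
    · simp [hs, Real.sign_of_pos h]
  have hsabs : |s| = 1 := by
    rcases lt_or_gt_of_ne hσ with h | h
    · simp [hs, Real.sign_of_neg h]
    · simp [hs, Real.sign_of_pos h]
  have hA : s * (u + Δ) = -(K + G + ζ) + s * Δ := by
    rw [hu]; linear_combination (-(K + G + ζ)) * hss
  have hsΔ : s * Δ ≤ ζ := by
    calc s * Δ ≤ |s * Δ| := le_abs_self _
    _ = |Δ| := by rw [abs_mul, hsabs, one_mul]
    _ ≤ ζ := hΔ
  have hAle : s * (u + Δ) ≤ -(K + G) := by rw [hA]; linarith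
  have hsev : s * e_v ≤ |e_v| := by
    calc s * e_v ≤ |s * e_v| := le_abs_self _
    _ = |e_v| := by rw [abs_mul, hsabs, one_mul]
  have hnum : |e_v| * (s * (u + Δ)) + G * (s * e_v) ≤ 0 := by
    have h1 : |e_v| * (s * (u + Δ)) ≤ |e_v| * (-(K + G)) :=
      mul_le_mul_of_nonneg_left hAle (abs_nonneg _)
    have h2 : G * (s * e_v) ≤ G * |e_v| := mul_le_mul_of_nonneg_left hsev hGpos.le
    have h3 : |e_v| * (-(K + G)) + G * |e_v| = -(K * |e_v|) := by ring
    have h4 : 0 ≤ K * |e_v| := mul_nonneg hKpos.le (abs_nonneg _)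
    linarith
  have key : s * ((u + Δ) + (|e_v| * (u + Δ) + G * e_v) / |w| ^ ((1:ℝ)/2)) ≤ -K := by
    have hfrac : (|e_v| * (s * (u + Δ)) + G * (s * e_v)) / |w| ^ ((1:ℝ)/2) ≤ 0 :=
      div_nonpos_of_nonpos_of_nonneg hnum hr.le
    have : s * ((u + Δ) + (|e_v| * (u + Δ) + G * e_v) / |w| ^ ((1:ℝ)/2))
        = s * (u + Δ) + (|e_v| * (s * (u + Δ)) + G * (s * e_v)) / |w| ^ ((1:ℝ)/2) := by
      ring
    rw [this]
    linarith
  calc s * ((u + Δ) + (|e_v| * (u + Δ) + G * e_v) / |w| ^ ((1:ℝ)/2)) ≤ -K := key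
  _ = -(γ₂ / T₂) * (α₂ * |σ| ^ p' + β₂ * |σ| ^ q') ^ k' := by rw [hK]; ring
end
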